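/- Let x, x' in R^N, let U_1,...,U_N be i.i.d. Uniform([-1,1]), and define the coordinatewise randomized rounding round_U. For any tau > 0, P[ ||round_U(x) - round_U(x')||^2 >= 2||x-x'|| sqrt(N) + tau^2 N ] <= exp(-tau^4 N / 100). -/

import Mathlib

open MeasureTheory

/-- Randomized rounding of a real number `x` with threshold `u`:
outputs `1` if `x ≥ u` and `-1` otherwise. -/
noncomputable def rnd (u x : ℝ) : ℝ := if u ≤ x then 1 else -1

/-- The uniform probability measure on `[-1, 1]`. -/
noncomputable def unifIcc : Measure ℝ := (2 : ENNReal)⁻¹ • volume.restrict (Set.Icc (-1 : ℝ) 1)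

instance : IsProbabilityMeasure unifIcc := by
  constructor
  simp only [unifIcc, Measure.smul_apply, Measure.restrict_apply MeasurableSet.univ,
    Set.univ_inter, Real.volume_Icc, smul_eq_mul]
  rw [show (1:ℝ) - -1 = 2 by norm_num]
  rw [show ENNReal.ofReal (2:ℝ) = 2 by simp]
  simp [ENNReal.inv_mul_cancel]

lemma unifIcc_Ioc_le (a b : ℝ) :
    unifIcc (Set.Ioc a b) ≤ ENNReal.ofReal ((b - a) / 2) := by
  have h1 : unifIcc (Set.Ioc a b) ≤ (2 : ENNReal)⁻¹ * volume (Set.Ioc a b) := by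
    simp only [unifIcc, Measure.smul_apply, smul_eq_mul]
    gcongr
    exact Measure.le_iff'.2 fun _ => Measure.restrict_le_self _
  refine h1.trans ?_
  rw [Real.volume_Ioc, ENNReal.ofReal_div_of_pos (by norm_num), ENNReal.div_eq_inv_mul]
  gcongr
  simp

lemma rnd_sq (u a b : ℝ) :
    (rnd u a - rnd u b)^2 = if u ∈ Set.Ioc (min a b) (max a b) then 4 else 0 := by
  simp only [rnd, Set.mem_Ioc, lt_min_iff, le_max_iff, min_lt_iff]
  by_cases ha : u ≤ a <;> by_cases hb : u ≤ b <;>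
      simp only [ha, hb, if_true, if_false] <;> split_ifs with hm <;> (try push_neg at *)
  · exfalso; rcases hm.1 with h | h <;> linarith
  · norm_num
  · norm_num
  · exfalso; exact (hm (Or.inr hb)).1
  · norm_num
  · exfalso; exact (hm (Or.inl ha)).2
  · exfalso; rcases hm.2 with h | h <;> exact h
  · norm_num

lemma coord_bound (t : ℝ) (ht : 0 ≤ t) (a b : ℝ) :
    ∫⁻ u, ENNReal.ofReal (Real.exp (t * (rnd u a - rnd u b)^2)) ∂unifIcc
      ≤ ENNReal.ofReal (Real.exp ((Real.exp (4*t) - 1) * min 1 (|a - b| / 2))) := by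
  set I := Set.Ioc (min a b) (max a b) with hI
  have hImeas : MeasurableSet I := measurableSet_Ioc
  set c := Real.exp (4*t) - 1 with hc
  set q := min 1 (|a - b| / 2) with hqdef
  have hq0 : 0 ≤ q := le_min one_pos.le (by positivity)
  have hc0 : 0 ≤ c := by
    have := Real.one_le_exp (by linarith : (0:ℝ) ≤ 4*t); simp only [hc]; linarith
  have hq : unifIcc I ≤ ENNReal.ofReal q := by
    rcases min_cases 1 (|a - b| / 2) with ⟨h, _⟩ | ⟨h, _⟩ <;> rw [hqdef, h]
    · simpa using prob_le_one (μ := unifIcc) (s := I)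
    · refine (unifIcc_Ioc_le _ _).trans ?_
      rw [max_sub_min_eq_abs, abs_sub_comm]
  have hfun : ∀ u, ENNReal.ofReal (Real.exp (t * (rnd u a - rnd u b)^2))
      = I.indicator (fun _ => ENNReal.ofReal (Real.exp (4*t))) u
        + Iᶜ.indicator (fun _ => (1:ENNReal)) u := by
    intro u
    rw [rnd_sq]
    by_cases hu : u ∈ I
    · rw [if_pos (show u ∈ Set.Ioc (min a b) (max a b) from hu)]
      simp [hu, Set.indicator, mul_comm]
    · rw [if_neg (show u ∉ Set.Ioc (min a b) (max a b) from hu)]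
      simp [hu, Set.indicator]
  simp_rw [hfun]
  rw [lintegral_add_left (measurable_const.indicator hImeas)]
  rw [lintegral_indicator_const hImeas, lintegral_indicator_const hImeas.compl, one_mul]
  have hsplit : ENNReal.ofReal (Real.exp (4*t)) = ENNReal.ofReal c + 1 := by
    rw [← ENNReal.ofReal_one, ← ENNReal.ofReal_add hc0 zero_le_one]
    congr 1; simp [hc]
  rw [hsplit, add_mul, one_mul, add_assoc, measure_add_measure_compl hImeas, measure_univ]
  calc ENNReal.ofReal c * unifIcc I + 1 ≤ ENNReal.ofReal c * ENNReal.ofReal q + 1 := by gcongr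
    _ = ENNReal.ofReal (c * q + 1) := by
        rw [← ENNReal.ofReal_mul hc0, ← ENNReal.ofReal_one,
          ← ENNReal.ofReal_add (mul_nonneg hc0 hq0) zero_le_one]
    _ ≤ ENNReal.ofReal (Real.exp (c * q)) :=
        ENNReal.ofReal_le_ofReal (by have := Real.add_one_le_exp (c*q); linarith)

lemma lintegral_pi_prod {n : ℕ} (μ : Measure ℝ) [SigmaFinite μ]
    (f : Fin n → ℝ → ENNReal) (hf : ∀ i, Measurable (f i)) :
    ∫⁻ U : Fin n → ℝ, ∏ i, f i (U i) ∂(Measure.pi fun _ => μ)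
      = ∏ i, ∫⁻ u, f i u ∂μ := by
  induction n with
  | zero => simp [Measure.pi_of_empty]
  | succ n ih =>
      rw [← ((measurePreserving_piFinSuccAbove (fun _ : Fin (n+1) => μ) 0).symm).lintegral_comp_emb
        (MeasurableEquiv.measurableEmbedding _)]
      have : ∀ z : ℝ × (Fin n → ℝ), ∀ i : Fin (n+1),
          ((MeasurableEquiv.piFinSuccAbove (fun _ => ℝ) 0).symm z) i
            = Fin.cons (α := fun _ : Fin (n+1) => ℝ) z.1 z.2 i := by
        intro z i
        simp [MeasurableEquiv.piFinSuccAbove_symm_apply, Fin.insertNthEquiv,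
          Fin.insertNth_zero, Fin.zero_succAbove]
      simp_rw [this, Fin.prod_univ_succ, Fin.cons_zero, Fin.cons_succ]
      rw [lintegral_prod_mul (f := f 0) (g := fun y : Fin n → ℝ => ∏ i : Fin n, f i.succ (y i))
        (hf 0).aemeasurable
        (Measurable.aemeasurable
          (Finset.measurable_prod _ fun i _ => (hf i.succ).comp (measurable_pi_apply i)))]
      rw [ih (fun i => f i.succ) (fun i => hf i.succ)]

lemma measurable_rnd (v : ℝ) : Measurable fun u : ℝ => rnd u v :=
  Measurable.ite (measurableSet_le measurable_id measurable_const)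
    measurable_const measurable_const

/-- For fixed `x, x' ∈ ℝ^N`, i.i.d. `U_i ~ Unif([-1,1])` and any `τ > 0`,
`P[‖round_U(x) - round_U(x')‖² ≥ 2‖x-x'‖√N + τ²N] ≤ exp(-τ⁴N/100)`. -/
theorem stmt_2 (N : ℕ) (x x' : Fin N → ℝ) (τ : ℝ) (hτ : 0 < τ) :
    (Measure.pi fun _ : Fin N => unifIcc)
        {U | 2 * Real.sqrt (∑ i, (x i - x' i) ^ 2) * Real.sqrt N + τ ^ 2 * N
              ≤ ∑ i, (rnd (U i) (x i) - rnd (U i) (x' i)) ^ 2}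
      ≤ ENNReal.ofReal (Real.exp (-(τ ^ 4) * N / 100)) := by
  by_cases hN : N = 0
  · subst hN
    refine le_trans prob_le_one ?_
    simp
  by_cases hτ4 : τ^2 ≤ 4
  swap
  · push_neg at hτ4
    have hNR : (1:ℝ) ≤ N := by exact_mod_cast Nat.one_le_iff_ne_zero.2 hN
    have hempty : {U : Fin N → ℝ | 2 * Real.sqrt (∑ i, (x i - x' i) ^ 2) * Real.sqrt N + τ ^ 2 * N
              ≤ ∑ i, (rnd (U i) (x i) - rnd (U i) (x' i)) ^ 2} = ∅ := by
      ext U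
      simp only [Set.mem_setOf_eq, Set.mem_empty_iff_false, iff_false, not_le]
      have hterm : ∀ i, (rnd (U i) (x i) - rnd (U i) (x' i))^2 ≤ 4 := by
        intro i; rw [rnd_sq]; split_ifs <;> norm_num
      have hsum : ∑ i, (rnd (U i) (x i) - rnd (U i) (x' i))^2 ≤ 4 * N := by
        calc ∑ i, (rnd (U i) (x i) - rnd (U i) (x' i))^2 ≤ ∑ _i : Fin N, (4:ℝ) :=
            Finset.sum_le_sum fun i _ => hterm i
          _ = 4 * N := by simp [mul_comm]
      have h1 : (0:ℝ) ≤ 2 * Real.sqrt (∑ i, (x i - x' i) ^ 2) * Real.sqrt N := by positivity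
      nlinarith
    rw [hempty]
    simp
  -- main case
  set t := τ^2/32 with htdef
  have ht0 : 0 < t := by positivity
  set c := Real.exp (4*t) - 1 with hcdef
  set q : Fin N → ℝ := fun i => min 1 (|x i - x' i|/2) with hqdef
  set D := Real.sqrt (∑ i, (x i - x' i) ^ 2) with hDdef
  set a := 2 * D * Real.sqrt N + τ^2 * N with hadef
  set g : Fin N → ℝ → ENNReal :=
    fun i u => ENNReal.ofReal (Real.exp (t * (rnd u (x i) - rnd u (x' i))^2)) with hgdef
  have hg : ∀ i, Measurable (g i) := by
    intro i
    exact (Real.measurable_exp.comp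
      ((((measurable_rnd (x i)).sub (measurable_rnd (x' i))).pow_const 2).const_mul t)).ennreal_ofReal
  have hS : Measurable fun U : Fin N → ℝ =>
      ∑ i, (rnd (U i) (x i) - rnd (U i) (x' i))^2 :=
    Finset.measurable_sum _ fun i _ =>
      (((measurable_rnd (x i)).comp (measurable_pi_apply i)).sub
        ((measurable_rnd (x' i)).comp (measurable_pi_apply i))).pow_const 2
  have hf : Measurable fun U : Fin N → ℝ =>
      ENNReal.ofReal (Real.exp (t * ∑ i, (rnd (U i) (x i) - rnd (U i) (x' i))^2)) :=
    (Real.measurable_exp.comp (hS.const_mul t)).ennreal_ofReal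
  -- Chernoff step
  have key : ENNReal.ofReal (Real.exp (t*a))
        * (Measure.pi fun _ : Fin N => unifIcc) {U | a ≤ ∑ i, (rnd (U i) (x i) - rnd (U i) (x' i)) ^ 2}
      ≤ ∫⁻ U, ENNReal.ofReal (Real.exp (t * ∑ i, (rnd (U i) (x i) - rnd (U i) (x' i))^2))
          ∂(Measure.pi fun _ : Fin N => unifIcc) := by
    refine le_trans ?_ (mul_meas_ge_le_lintegral₀ hf.aemeasurable (ENNReal.ofReal (Real.exp (t*a))))
    apply mul_le_mul_right
    apply measure_mono
    intro U hU
    simp only [Set.mem_setOf_eq] at *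
    exact ENNReal.ofReal_le_ofReal (Real.exp_le_exp.2 (mul_le_mul_of_nonneg_left hU ht0.le))
  have prodeq : (∫⁻ U, ENNReal.ofReal (Real.exp (t * ∑ i, (rnd (U i) (x i) - rnd (U i) (x' i))^2))
          ∂(Measure.pi fun _ : Fin N => unifIcc))
      = ∏ i, ∫⁻ u, g i u ∂unifIcc := by
    have hr : ∀ U : Fin N → ℝ,
        ENNReal.ofReal (Real.exp (t * ∑ i, (rnd (U i) (x i) - rnd (U i) (x' i))^2))
          = ∏ i, g i (U i) := by
      intro U
      rw [Finset.mul_sum, Real.exp_sum,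
        ENNReal.ofReal_prod_of_nonneg (fun i _ => (Real.exp_pos _).le)]
    simp_rw [hr]
    exact lintegral_pi_prod unifIcc g hg
  have prodle : ∏ i, ∫⁻ u, g i u ∂unifIcc ≤ ENNReal.ofReal (Real.exp (c * ∑ i, q i)) := by
    calc ∏ i, ∫⁻ u, g i u ∂unifIcc ≤ ∏ i, ENNReal.ofReal (Real.exp (c * q i)) :=
        Finset.prod_le_prod' fun i _ => coord_bound t ht0.le (x i) (x' i)
      _ = ENNReal.ofReal (Real.exp (c * ∑ i, q i)) := by
        rw [Finset.mul_sum, Real.exp_sum,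
          ENNReal.ofReal_prod_of_nonneg (fun i _ => (Real.exp_pos _).le)]
  have hεne : ENNReal.ofReal (Real.exp (t*a)) ≠ 0 :=
    ne_of_gt (ENNReal.ofReal_pos.2 (Real.exp_pos _))
  have final1 : (Measure.pi fun _ : Fin N => unifIcc)
        {U | a ≤ ∑ i, (rnd (U i) (x i) - rnd (U i) (x' i)) ^ 2}
      ≤ ENNReal.ofReal (Real.exp (c * ∑ i, q i - t * a)) := by
    have h2 := le_trans key (prodeq.le.trans prodle)
    calc (Measure.pi fun _ : Fin N => unifIcc) {U | a ≤ ∑ i, (rnd (U i) (x i) - rnd (U i) (x' i)) ^ 2}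
        = (ENNReal.ofReal (Real.exp (t*a)))⁻¹ * (ENNReal.ofReal (Real.exp (t*a))
            * (Measure.pi fun _ : Fin N => unifIcc) {U | a ≤ ∑ i, (rnd (U i) (x i) - rnd (U i) (x' i)) ^ 2}) := by
          rw [← mul_assoc, ENNReal.inv_mul_cancel hεne ENNReal.ofReal_ne_top, one_mul]
      _ ≤ (ENNReal.ofReal (Real.exp (t*a)))⁻¹ * ENNReal.ofReal (Real.exp (c * ∑ i, q i)) :=
          mul_le_mul_right h2 _
      _ = ENNReal.ofReal (Real.exp (c * ∑ i, q i - t * a)) := by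
          rw [← ENNReal.ofReal_inv_of_pos (Real.exp_pos _), ← Real.exp_neg,
            ← ENNReal.ofReal_mul (Real.exp_pos _).le, ← Real.exp_add]
          congr 1
          ring_nf
  refine final1.trans (ENNReal.ofReal_le_ofReal (Real.exp_le_exp.2 ?_))
  -- real-valued inequality
  set Q := ∑ i, q i with hQdef
  have hQ0 : 0 ≤ Q := Finset.sum_nonneg fun i _ => le_min one_pos.le (by positivity)
  have hQN : Q ≤ N := by
    calc Q ≤ ∑ _i : Fin N, (1:ℝ) := Finset.sum_le_sum fun i _ => min_le_left _ _
      _ = N := by simp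
  have hQD : 2 * Q ≤ D * Real.sqrt N := by
    have hcs := Finset.sum_mul_sq_le_sq_mul_sq Finset.univ (fun i => |x i - x' i|) (fun _ => 1)
    have h1 : (∑ i, |x i - x' i|)^2 ≤ (∑ i, (x i - x' i)^2) * N := by
      simpa [sq_abs] using hcs
    have h2 : ∑ i, |x i - x' i| ≤ Real.sqrt ((∑ i, (x i - x' i)^2) * N) := by
      refine (Real.le_sqrt (Finset.sum_nonneg fun i _ => abs_nonneg _)
        (mul_nonneg (Finset.sum_nonneg fun i _ => sq_nonneg _) (Nat.cast_nonneg N))).mpr h1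
    have h3 : Real.sqrt ((∑ i, (x i - x' i)^2) * N) = D * Real.sqrt N := by
      rw [hDdef, Real.sqrt_mul (Finset.sum_nonneg fun i _ => sq_nonneg _)]
    have h4 : Q ≤ (∑ i, |x i - x' i|) / 2 := by
      rw [hQdef, Finset.sum_div]
      exact Finset.sum_le_sum fun i _ => min_le_right _ _
    linarith [h2, h3 ▸ h2]
  have h4t : |4*t| ≤ 1 := by
    rw [abs_of_nonneg (by positivity)]
    rw [htdef]; linarith
  have hcb : c ≤ 4*t + 12*t^2 := by
    have h := Real.exp_bound h4t (by norm_num : 0 < 2)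
    simp only [Finset.sum_range_succ, Finset.sum_range_zero, Nat.factorial] at h
    rw [abs_le] at h
    have := h.2
    rw [hcdef]
    nlinarith [sq_abs (4*t), abs_nonneg (4*t)]
  have step1 : c * Q ≤ (4*t + 12*t^2) * Q := mul_le_mul_of_nonneg_right hcb hQ0
  have step2 : (4*t) * Q ≤ 2*t*(D * Real.sqrt N) := by nlinarith [hQD, ht0.le]
  have step3 : 12*t^2*Q ≤ 12*t^2*N := by nlinarith [hQN, sq_nonneg t]
  have hNnn : (0:ℝ) ≤ N := Nat.cast_nonneg N
  have e2 : 12*t^2*(N:ℝ) - t*(τ^2*N) ≤ -(τ^4)*N/100 := by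
    rw [htdef]
    nlinarith [mul_nonneg (pow_nonneg hτ.le 4) hNnn]
  rw [hadef]
  nlinarith [step1, step2, step3, e2]
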